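/- arXiv:1705.07097 — 4 statements merged into one kernel-verified Lean document; each statement's English description precedes it below -/
import Mathlib

section
/- Let E be a real separable Hilbert space, A_Q a nonnegative self-adjoint continuous linear operator on E, and Q(V) = ⟨A_Q V, V⟩. If f : E → ℂ is smooth and lies in S(E,Q), then for all x, y ∈ E the Taylor series of f at x converges absolutely to f(x+y): the family m ↦ (1/m!)·(dᵐf)(x)(y,…,y) is summable with sum f(x+y), and ∑_{m≥0} (1/m!)·|(dᵐf)(x)(y,…,y)| ≤ ‖f‖_Q · exp(Q(y)^{1/2}). -/
open scoped InnerProductSpace BigOperators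

noncomputable section

/-- `f` belongs to the symbol class `S(E,Q)` with admissible constant `C`:
`f` is smooth and all its iterated Fréchet derivatives satisfy the product bound. -/
def MemSWith {E : Type*} [NormedAddCommGroup E] [NormedSpace ℝ E]
    (Q : E → ℝ) (f : E → ℂ) (C : ℝ) : Prop :=
  ContDiff ℝ (⊤ : ℕ∞) f ∧
    ∀ (m : ℕ) (x : E) (V : Fin m → E),
      ‖iteratedFDeriv ℝ m f x V‖ ≤ C * ∏ i, Real.sqrt (Q (V i))

/-- The norm `‖f‖_Q`: the smallest admissible constant. -/
def normS {E : Type*} [NormedAddCommGroup E] [NormedSpace ℝ E]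
    (Q : E → ℝ) (f : E → ℂ) : ℝ :=
  sInf {C : ℝ | 0 ≤ C ∧ MemSWith Q f C}

lemma aux_iteratedDeriv {E : Type*} [NormedAddCommGroup E] [NormedSpace ℝ E]
    (f : E → ℂ) (hf : ContDiff ℝ (⊤ : ℕ∞) f) (x y : E) (n : ℕ) (t : ℝ) :
    iteratedDeriv n (fun s : ℝ => f (x + s • y)) t
      = iteratedFDeriv ℝ n f (x + t • y) (fun _ => y) := by
  induction n generalizing t with
  | zero => simp
  | succ n IH =>
    rw [iteratedDeriv_succ]
    have hfun : iteratedDeriv n (fun s : ℝ => f (x + s • y))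
        = fun s => iteratedFDeriv ℝ n f (x + s • y) (fun _ => y) := funext IH
    rw [hfun]
    have h1 : HasDerivAt (fun s : ℝ => x + s • y) y t := by
      simpa using ((hasDerivAt_id t).smul_const y).const_add x
    have hdiff : Differentiable ℝ (iteratedFDeriv ℝ n f) :=
      hf.differentiable_iteratedFDeriv (by exact_mod_cast lt_top_iff_ne_top.2 (by simp))
    have h2 : HasFDerivAt (iteratedFDeriv ℝ n f)
        (fderiv ℝ (iteratedFDeriv ℝ n f) (x + t • y)) (x + t • y) :=
      (hdiff (x + t • y)).hasFDerivAt
    have h3 := h2.comp_hasDerivAt t h1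
    have h4 := (ContinuousMultilinearMap.apply ℝ (fun _ : Fin n => E) ℂ
      (fun _ => y)).hasFDerivAt.comp_hasDerivAt t h3
    have h4' : HasDerivAt (fun s : ℝ => iteratedFDeriv ℝ n f (x + s • y) (fun _ => y))
        ((fderiv ℝ (iteratedFDeriv ℝ n f) (x + t • y) y) (fun _ => y)) t := h4
    rw [h4'.deriv]
    simp [iteratedFDeriv_succ_apply_left, Fin.tail]
    rfl

theorem taylor_series_converges_in_symbol_class
    {E : Type*} [NormedAddCommGroup E] [InnerProductSpace ℝ E]
    [TopologicalSpace.SeparableSpace E] [CompleteSpace E]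
    (A : E →L[ℝ] E)
    (hsa : ∀ v w : E, ⟪A v, w⟫_ℝ = ⟪v, A w⟫_ℝ)
    (hnn : ∀ v : E, 0 ≤ ⟪A v, v⟫_ℝ)
    (Q : E → ℝ) (hQ : ∀ v, Q v = ⟪A v, v⟫_ℝ)
    (f : E → ℂ) (hf : ∃ C, 0 ≤ C ∧ MemSWith Q f C)
    (x y : E) :
    HasSum (fun m : ℕ => ((m.factorial : ℂ))⁻¹ • iteratedFDeriv ℝ m f x (fun _ => y))
      (f (x + y)) ∧
    Summable (fun m : ℕ => ((m.factorial : ℝ))⁻¹ * ‖iteratedFDeriv ℝ m f x (fun _ => y)‖) ∧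
    (∑' m : ℕ, ((m.factorial : ℝ))⁻¹ * ‖iteratedFDeriv ℝ m f x (fun _ => y)‖)
      ≤ normS Q f * Real.exp (Real.sqrt (Q y)) := by
  classical
  obtain ⟨C, hC0, hCmem⟩ := hf
  set q := Real.sqrt (Q y) with hqdef
  have hq0 : 0 ≤ q := Real.sqrt_nonneg _
  set D : ℕ → ℂ := fun m => iteratedFDeriv ℝ m f x (fun _ => y) with hD
  -- bound with any admissible constant
  have keyC : ∀ (C' : ℝ), MemSWith Q f C' → ∀ (n : ℕ) (z : E),
      ‖iteratedFDeriv ℝ n f z (fun _ => y)‖ ≤ C' * q ^ n := by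
    intro C' hC' n z
    simpa [Finset.prod_const, Finset.card_univ] using hC'.2 n z (fun _ => y)
  have hne : ({C' : ℝ | 0 ≤ C' ∧ MemSWith Q f C'}).Nonempty := ⟨C, hC0, hCmem⟩
  have hN0 : 0 ≤ normS Q f := le_csInf hne fun b hb => hb.1
  have keyN : ∀ (n : ℕ) (z : E),
      ‖iteratedFDeriv ℝ n f z (fun _ => y)‖ ≤ normS Q f * q ^ n := by
    intro n z
    rcases eq_or_lt_of_le (pow_nonneg hq0 n) with h0 | hpos
    · have h1 := keyC C hCmem n z
      rw [← h0] at h1 ⊢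
      simpa using h1
    · rw [mul_comm]
      rw [← div_le_iff₀' hpos]
      apply le_csInf hne
      intro b hb
      rw [div_le_iff₀' hpos, mul_comm]
      exact keyC b hb.2 n z
  -- summability of the norms
  have hsumexp : Summable (fun m : ℕ => q ^ m / m.factorial) :=
    Real.summable_pow_div_factorial q
  have hsum2 : Summable (fun m : ℕ => ((m.factorial : ℝ))⁻¹ * ‖D m‖) := by
    refine Summable.of_nonneg_of_le (fun m => by positivity) (fun m => ?_)
      (hsumexp.mul_left C)
    calc ((m.factorial : ℝ))⁻¹ * ‖D m‖
        ≤ ((m.factorial : ℝ))⁻¹ * (C * q ^ m) := by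
          gcongr
          exact keyC C hCmem m x
      _ = C * (q ^ m / m.factorial) := by ring
  -- tsum estimate
  have htsum : (∑' m : ℕ, ((m.factorial : ℝ))⁻¹ * ‖D m‖)
      ≤ normS Q f * Real.exp q := by
    have h1 : ∀ m : ℕ, ((m.factorial : ℝ))⁻¹ * ‖D m‖
        ≤ normS Q f * (q ^ m / m.factorial) := by
      intro m
      calc ((m.factorial : ℝ))⁻¹ * ‖D m‖
          ≤ ((m.factorial : ℝ))⁻¹ * (normS Q f * q ^ m) := by
            gcongr
            exact keyN m x
        _ = normS Q f * (q ^ m / m.factorial) := by ring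
    calc (∑' m : ℕ, ((m.factorial : ℝ))⁻¹ * ‖D m‖)
        ≤ ∑' m : ℕ, normS Q f * (q ^ m / m.factorial) :=
          Summable.tsum_le_tsum h1 hsum2 (hsumexp.mul_left _)
      _ = normS Q f * ∑' m : ℕ, q ^ m / m.factorial := tsum_mul_left
      _ = normS Q f * Real.exp q := by
          rw [Real.exp_eq_exp_ℝ, NormedSpace.exp_eq_tsum_div]
  -- summability of the complex series
  have hnormeq : (fun m : ℕ => ‖((m.factorial : ℂ))⁻¹ • D m‖)
      = fun m : ℕ => ((m.factorial : ℝ))⁻¹ * ‖D m‖ := by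
    funext m
    rw [norm_smul, norm_inv]
    simp
  have hsc : Summable (fun m : ℕ => ((m.factorial : ℂ))⁻¹ • D m) := by
    apply Summable.of_norm
    rw [hnormeq]
    exact hsum2
  -- the one-variable function g
  set g : ℝ → ℂ := fun s => f (x + s • y) with hgdef
  have hg : ContDiff ℝ (⊤ : ℕ∞) g :=
    hCmem.1.comp (contDiff_const.add (contDiff_id.smul contDiff_const))
  have hIccUD : UniqueDiffOn ℝ (Set.Icc (0:ℝ) 1) := uniqueDiffOn_Icc zero_lt_one
  have hgW : ∀ (k : ℕ) (t : ℝ), t ∈ Set.Icc (0:ℝ) 1 →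
      iteratedDerivWithin k g (Set.Icc 0 1) t
        = iteratedFDeriv ℝ k f (x + t • y) (fun _ => y) := by
    intro k t ht
    have hT : HasFTaylorSeriesUpTo (⊤ : ℕ∞) g (ftaylorSeries ℝ g) :=
      contDiff_iff_ftaylorSeries.mp (hg.of_le (by simp))
    have hTOn : HasFTaylorSeriesUpToOn (⊤ : ℕ∞) g (ftaylorSeries ℝ g) (Set.Icc 0 1) :=
      (hasFTaylorSeriesUpToOn_univ_iff.mpr hT).mono (Set.subset_univ _)
    have h1 : iteratedDerivWithin k g (Set.Icc 0 1) t = iteratedDeriv k g t := by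
      rw [iteratedDerivWithin_eq_iteratedFDerivWithin, iteratedDeriv_eq_iteratedFDeriv]
      congr 1
      exact (hTOn.eq_iteratedFDerivWithin_of_uniqueDiffOn (by exact_mod_cast le_top)
        hIccUD ht).symm
    rw [h1]
    exact aux_iteratedDeriv f hCmem.1 x y k t
  -- remainder estimate
  have hrem : ∀ n : ℕ, ‖f (x + y) - ∑ m ∈ Finset.range (n+1), ((m.factorial : ℂ))⁻¹ • D m‖
      ≤ C * q ^ (n+1) / n.factorial := by
    intro n
    have hmem1 : (1:ℝ) ∈ Set.Icc (0:ℝ) 1 := by constructor <;> norm_num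
    have hbd : ∀ t ∈ Set.Icc (0:ℝ) 1,
        ‖iteratedDerivWithin (n+1) g (Set.Icc 0 1) t‖ ≤ C * q ^ (n+1) := by
      intro t ht
      rw [hgW (n+1) t ht]
      exact keyC C hCmem (n+1) (x + t • y)
    have := taylor_mean_remainder_bound (le_of_lt zero_lt_one)
      ((hg.of_le (by exact_mod_cast le_top)).contDiffOn) hmem1 hbd
    have hg1 : g 1 = f (x + y) := by simp [hgdef]
    have hTeval : taylorWithinEval g n (Set.Icc 0 1) 0 1
        = ∑ m ∈ Finset.range (n+1), ((m.factorial : ℂ))⁻¹ • D m := by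
      rw [taylor_within_apply]
      apply Finset.sum_congr rfl
      intro k hk
      rw [hgW k 0 (by constructor <;> norm_num)]
      have hx0 : x + (0:ℝ) • y = x := by simp
      rw [hx0]
      rw [sub_zero, one_pow, mul_one]
      rw [hD]
      rw [Complex.real_smul]
      push_cast
      rw [smul_eq_mul]
    rw [hg1, hTeval] at this
    simpa using this
  -- remainder tends to zero
  have hzero : Filter.Tendsto (fun n : ℕ => C * q ^ (n+1) / n.factorial)
      Filter.atTop (nhds 0) := by
    have h1 : Filter.Tendsto (fun n : ℕ => q ^ n / n.factorial)
        Filter.atTop (nhds 0) := hsumexp.tendsto_atTop_zero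
    have h2 := h1.const_mul (C * q)
    rw [mul_zero] at h2
    convert h2 using 2 with n
    rw [pow_succ]
    ring
  -- partial sums converge to f (x + y)
  have h5 : Filter.Tendsto (fun n : ℕ => ∑ m ∈ Finset.range (n+1),
      ((m.factorial : ℂ))⁻¹ • D m) Filter.atTop (nhds (f (x + y))) := by
    rw [tendsto_iff_norm_sub_tendsto_zero]
    apply squeeze_zero (fun n => norm_nonneg _) (fun n => ?_) hzero
    rw [norm_sub_rev]
    exact hrem n
  have hfull : Filter.Tendsto (fun n : ℕ => ∑ m ∈ Finset.range n,
      ((m.factorial : ℂ))⁻¹ • D m) Filter.atTop (nhds (f (x + y))) :=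
    (Filter.tendsto_add_atTop_iff_nat 1).mp h5
  have hS := hsc.hasSum
  have heq : (∑' m : ℕ, ((m.factorial : ℂ))⁻¹ • D m) = f (x + y) :=
    tendsto_nhds_unique hS.tendsto_sum_nat hfull
  exact ⟨heq ▸ hS, hsum2, htsum⟩

end
end

section
/- Let E be a real separable Hilbert space, A_Q a nonnegative self-adjoint trace-class continuous linear operator on E, Q(V) = ⟨A_Q V, V⟩, and Δ the Laplacian Δf(x) = ∑_j (d²f)(x)(u_j,u_j) on S(E,Q). For every f ∈ S(E,Q) and h > 0: the iterates satisfy Δᵐf ∈ S(E,Q) with ‖Δᵐf‖_Q ≤ (Tr A_Q)ᵐ·‖f‖_Q for all m; for each x ∈ E the series (H_{−h}f)(x) := ∑_{m≥0} (−1)ᵐ hᵐ/(2ᵐ m!) (Δᵐf)(x) converges absolutely; and the function H_{−h}f belongs to S(E,Q) with ‖H_{−h}f‖_Q ≤ e^{(h/2)·Tr A_Q}·‖f‖_Q. -/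
open scoped InnerProductSpace BigOperators

noncomputable section

/-- The Laplacian associated with the Hilbert basis `u`:
`Δf(x) = ∑_j (d²f)(x)(u_j, u_j)`. -/
def Lap {E : Type*} [NormedAddCommGroup E] [InnerProductSpace ℝ E]
    (u : HilbertBasis ℕ ℝ E) (f : E → ℂ) : E → ℂ :=
  fun x => ∑' j : ℕ, iteratedFDeriv ℝ 2 f x ![u j, u j]

open scoped ContDiff

section Aux

variable {E : Type*} [NormedAddCommGroup E] [NormedSpace ℝ E]

lemma coe_le_inf (k : ℕ) : (k : WithTop ℕ∞) ≤ ∞ := by exact_mod_cast le_top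

lemma coe_lt_inf (k : ℕ) : (k : WithTop ℕ∞) < ∞ := by
  exact_mod_cast (WithTop.coe_lt_top k : (k : ℕ∞) < ⊤)

lemma inf_add_one_le_inf : ∞ + 1 ≤ (∞ : WithTop ℕ∞) := by exact_mod_cast le_top

/-- Derivatives along a line. -/
lemma line_deriv (n : ℕ) : ∀ (g : E → ℂ), ContDiff ℝ ∞ g → ∀ (x y : E) (t : ℝ),
    iteratedDeriv n (fun s : ℝ => g (x + s • y)) t
      = iteratedFDeriv ℝ n g (x + t • y) (fun _ => y) := by
  induction n with
  | zero =>
    intro g hg x y t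
    simp [iteratedDeriv_zero]
  | succ n IH =>
    intro g hg x y t
    rw [iteratedDeriv_succ']
    have hder : (deriv fun s : ℝ => g (x + s • y)) = fun s : ℝ => fderiv ℝ g (x + s • y) y := by
      funext s
      have h1 : HasDerivAt (fun s : ℝ => x + s • y) y s := by
        simpa using ((hasDerivAt_id s).smul_const y).const_add x
      have h2 : HasFDerivAt g (fderiv ℝ g (x + s • y)) (x + s • y) :=
        (hg.differentiable (by simp)).differentiableAt.hasFDerivAt
      exact (h2.comp_hasDerivAt s h1).deriv
    rw [hder]
    have hgd : ContDiff ℝ ∞ (fderiv ℝ g) := hg.fderiv_right inf_add_one_le_inf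
    have hg1 : ContDiff ℝ ∞ (fun z => fderiv ℝ g z y) := hgd.clm_apply contDiff_const
    rw [IH _ hg1 x y t]
    have h3 : (fun z => fderiv ℝ g z y)
        = (⇑(ContinuousLinearMap.apply ℝ ℂ y)) ∘ (fderiv ℝ g) := rfl
    rw [h3, (ContinuousLinearMap.apply ℝ ℂ y).iteratedFDeriv_comp_left hgd.contDiffAt (coe_le_inf n)]
    rw [show ((fun _ => y) : Fin (n+1) → E) = Fin.snoc (fun _ => y) y from ?_]
    · rw [iteratedFDeriv_succ_apply_right, Fin.init_snoc, Fin.snoc_last]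
      simp
    · funext i
      refine Fin.lastCases ?_ (fun j => ?_) i
      · simp [Fin.snoc_last]
      · simp [Fin.snoc_castSucc]

/-- A smooth function with uniformly geometric derivative bounds is analytic. -/
lemma analytic_of_bounds {g : E → ℂ} {C M : ℝ} (hM : 0 ≤ M)
    (hg : ContDiff ℝ ∞ g)
    (hb : ∀ (k : ℕ) (x : E), ‖iteratedFDeriv ℝ k g x‖ ≤ C * M ^ k) :
    ContDiff ℝ ω g := by
  have hC : 0 ≤ C := by
    have h0 := (norm_nonneg (iteratedFDeriv ℝ 0 g 0)).trans (hb 0 0)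
    simpa using h0
  apply AnalyticOnNhd.contDiff (f := g)
  intro x _
  set p : FormalMultilinearSeries ℝ E ℂ :=
    fun n => ((n.factorial : ℝ)⁻¹) • iteratedFDeriv ℝ n g x with hp
  have hfact : ∀ n : ℕ, (0:ℝ) < (n.factorial : ℝ) := fun n => by
    exact_mod_cast n.factorial_pos
  have hpn : ∀ n, ‖p n‖ ≤ C * M ^ n / (n.factorial : ℝ) := by
    intro n
    rw [show p n = ((n.factorial : ℝ))⁻¹ • iteratedFDeriv ℝ n g x from rfl]
    refine (norm_smul_le ((n.factorial : ℝ))⁻¹ (iteratedFDeriv ℝ n g x)).trans ?_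
    rw [norm_inv, Real.norm_natCast, inv_mul_eq_div, div_le_div_iff₀ (hfact n) (hfact n)]
    exact mul_le_mul_of_nonneg_right (hb n x) (hfact n).le
  have hr : (1 : ENNReal) ≤ p.radius := by
    have h1 := p.le_radius_of_bound (C * Real.exp M) (r := (1 : NNReal)) ?_
    · simpa using h1
    · intro n
      have h2 : M ^ n / (n.factorial : ℝ) ≤ Real.exp M := by
        have hs := Real.summable_pow_div_factorial M
        have h3 := Summable.le_tsum hs n (fun j _ => by positivity)
        refine h3.trans (le_of_eq ?_)
        rw [Real.exp_eq_exp_ℝ, NormedSpace.exp_eq_tsum_div]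
      calc ‖p n‖ * (1:ℝ) ^ n = ‖p n‖ := by simp
        _ ≤ C * M ^ n / (n.factorial : ℝ) := hpn n
        _ = C * (M ^ n / (n.factorial : ℝ)) := by ring
        _ ≤ C * Real.exp M := mul_le_mul_of_nonneg_left h2 hC
  have hball : HasFPowerSeriesOnBall g p x 1 := by
    refine ⟨hr, by norm_num, ?_⟩
    intro y _
    -- Taylor expansion along the segment from x to x + y
    set φ : ℝ → ℂ := fun t => g (x + t • y) with hφdef
    have hφ : ContDiff ℝ ∞ φ :=
      hg.comp (contDiff_const.add (contDiff_id.smul contDiff_const))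
    have hΦder : ∀ (k : ℕ) (t : ℝ),
        HasDerivAt (iteratedDeriv k φ) (iteratedDeriv (k+1) φ t) t := by
      intro k t
      have hdiff : Differentiable ℝ (iteratedDeriv k φ) :=
        ContDiff.differentiable_iteratedDeriv k hφ (coe_lt_inf k)
      rw [iteratedDeriv_succ]
      exact hdiff.differentiableAt.hasDerivAt
    have hΦbound : ∀ (k : ℕ) (t : ℝ), ‖iteratedDeriv k φ t‖ ≤ C * (M * ‖y‖) ^ k := by
      intro k t
      rw [line_deriv k g hg x y t]
      calc ‖iteratedFDeriv ℝ k g (x + t • y) (fun _ => y)‖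
          ≤ ‖iteratedFDeriv ℝ k g (x + t • y)‖ * ∏ _i : Fin k, ‖y‖ :=
            ContinuousMultilinearMap.le_opNorm _ _
        _ ≤ (C * M ^ k) * ‖y‖ ^ k := by
            rw [Finset.prod_const, Finset.card_univ, Fintype.card_fin]
            exact mul_le_mul_of_nonneg_right (hb k _) (by positivity)
        _ = C * (M * ‖y‖) ^ k := by rw [mul_pow]; ring
    have hψder : ∀ (N : ℕ) (t : ℝ),
        HasDerivAt (fun s => ∑ k ∈ Finset.range (N+1),
            ((1-s)^k / (k.factorial : ℝ)) • iteratedDeriv k φ s)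
          (((1-t)^N / (N.factorial : ℝ)) • iteratedDeriv (N+1) φ t) t := by
      intro N t
      induction N with
      | zero => simpa using hΦder 0 t
      | succ n IH =>
        have hsplit : (fun s => ∑ k ∈ Finset.range (n+1+1),
              ((1-s)^k / (k.factorial : ℝ)) • iteratedDeriv k φ s)
            = fun s => (∑ k ∈ Finset.range (n+1),
                ((1-s)^k / (k.factorial : ℝ)) • iteratedDeriv k φ s)
              + ((1-s)^(n+1) / ((n+1).factorial : ℝ)) • iteratedDeriv (n+1) φ s := by
          funext s; rw [Finset.sum_range_succ]
        rw [hsplit]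
        have h1 : HasDerivAt (fun s : ℝ => 1 - s) (-1) t := by
          simpa using (hasDerivAt_id t).const_sub 1
        have hc : HasDerivAt (fun s : ℝ => (1-s)^(n+1) / ((n+1).factorial : ℝ))
            ((((n:ℝ)+1) * (1-t)^n * (-1)) / ((n+1).factorial : ℝ)) t := by
          have h2 := h1.pow (n+1)
          simpa using h2.div_const ((n+1).factorial : ℝ)
        have ha := hc.smul (hΦder (n+1) t)
        have htot := IH.add ha
        convert htot using 1
        · rfl
        · rfl
        have hc' : (((n:ℝ)+1) * (1-t)^n * (-1)) / ((n+1).factorial : ℝ)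
            = -((1-t)^n / (n.factorial : ℝ)) := by
          rw [Nat.factorial_succ]
          push_cast
          field_simp
        rw [hc']
        module
    -- Taylor estimate
    have htaylor : ∀ N : ℕ,
        ‖φ 1 - ∑ k ∈ Finset.range (N+1), ((k.factorial : ℝ)⁻¹) • iteratedDeriv k φ 0‖
          ≤ C * (M * ‖y‖) ^ (N+1) / (N.factorial : ℝ) := by
      intro N
      set ψ : ℝ → ℂ := fun s => ∑ k ∈ Finset.range (N+1),
          ((1-s)^k / (k.factorial : ℝ)) • iteratedDeriv k φ s with hψdef
      have hψ1 : ψ 1 = φ 1 := by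
        simp only [hψdef]
        rw [Finset.sum_eq_single 0]
        · simp
        · intro k _ hk0
          simp [zero_pow hk0]
        · intro habs
          exact absurd (Finset.mem_range.mpr (Nat.succ_pos N)) habs
      have hψ0 : ψ 0 = ∑ k ∈ Finset.range (N+1),
          ((k.factorial : ℝ)⁻¹) • iteratedDeriv k φ 0 := by
        simp only [hψdef]
        refine Finset.sum_congr rfl fun k _ => ?_
        norm_num
      have hbound : ∀ t ∈ Set.Ico (0:ℝ) 1,
          ‖((1-t)^N / (N.factorial : ℝ)) • iteratedDeriv (N+1) φ t‖
            ≤ C * (M * ‖y‖) ^ (N+1) / (N.factorial : ℝ) := by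
        intro t ht
        rw [norm_smul, Real.norm_eq_abs]
        have h1t : 0 ≤ 1 - t := by linarith [ht.2]
        have h1t' : 1 - t ≤ 1 := by linarith [ht.1]
        have habs : |(1-t)^N / (N.factorial : ℝ)| ≤ 1 / (N.factorial : ℝ) := by
          rw [abs_div, abs_pow, abs_of_nonneg h1t, abs_of_pos (hfact N)]
          gcongr
          exact pow_le_one₀ h1t h1t'
        calc |(1-t)^N / (N.factorial : ℝ)| * ‖iteratedDeriv (N+1) φ t‖
            ≤ (1 / (N.factorial : ℝ)) * (C * (M * ‖y‖) ^ (N+1)) :=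
              mul_le_mul habs (hΦbound (N+1) t) (norm_nonneg _) (by positivity)
          _ = C * (M * ‖y‖) ^ (N+1) / (N.factorial : ℝ) := by ring
      have hmv := norm_image_sub_le_of_norm_deriv_le_segment' (a := 0) (b := 1)
        (f := ψ)
        (f' := fun t => ((1-t)^N / (N.factorial : ℝ)) • iteratedDeriv (N+1) φ t)
        (fun t _ => (hψder N t).hasDerivWithinAt) hbound 1 (by norm_num)
      rw [hψ1, hψ0] at hmv
      simpa using hmv
    -- summability and convergence of the series
    have hterm_eq : ∀ n : ℕ, (p n fun _ => y)
        = ((n.factorial : ℝ)⁻¹) • iteratedDeriv n φ 0 := by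
      intro n
      rw [show p n = ((n.factorial : ℝ))⁻¹ • iteratedFDeriv ℝ n g x from rfl]
      rw [ContinuousMultilinearMap.smul_apply]
      congr 1
      rw [line_deriv n g hg x y 0]
      simp
    have hsummable : Summable fun n => ‖p n fun _ => y‖ := by
      refine Summable.of_nonneg_of_le (fun n => norm_nonneg _) (fun n => ?_)
        ((Real.summable_pow_div_factorial (M * ‖y‖)).mul_left C)
      calc ‖p n fun _ => y‖ ≤ ‖p n‖ * ∏ _i : Fin n, ‖y‖ :=
            ContinuousMultilinearMap.le_opNorm _ _
        _ ≤ (C * M ^ n / (n.factorial : ℝ)) * ‖y‖ ^ n := by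
            rw [Finset.prod_const, Finset.card_univ, Fintype.card_fin]
            exact mul_le_mul_of_nonneg_right (hpn n) (by positivity)
        _ = C * ((M * ‖y‖) ^ n / (n.factorial : ℝ)) := by
            rw [mul_pow]; ring
    rw [hasSum_iff_tendsto_nat_of_summable_norm hsummable]
    have hφ1 : φ 1 = g (x + y) := by rw [hφdef]; simp
    have hgoal : Filter.Tendsto
        (fun N => ∑ n ∈ Finset.range N, (p n fun _ => y)) Filter.atTop (nhds (φ 1)) := by
      rw [tendsto_iff_norm_sub_tendsto_zero]
      rw [← Filter.tendsto_add_atTop_iff_nat 1]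
      have hRHS : Filter.Tendsto (fun N : ℕ => C * (M * ‖y‖) ^ (N+1) / (N.factorial : ℝ))
          Filter.atTop (nhds 0) := by
        have h1 := (FloorSemiring.tendsto_pow_div_factorial_atTop (M * ‖y‖)).const_mul
          (C * (M * ‖y‖))
        rw [mul_zero] at h1
        refine h1.congr fun N => ?_
        rw [pow_succ]
        ring
      refine squeeze_zero (fun N => norm_nonneg _) (fun N => ?_) hRHS
      rw [norm_sub_rev]
      have h2 := htaylor N
      refine le_trans (le_of_eq ?_) h2
      congr 2
      refine Finset.sum_congr rfl fun n _ => hterm_eq n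
    rw [hφ1] at hgoal
    exact hgoal
  exact hball.analyticAt

/-- The `m`-th derivative of `x ↦ d²f(x)(v,w)`. -/
lemma key_shift (f : E → ℂ) (hf : ContDiff ℝ (⊤ : ℕ∞) f) (m : ℕ) (x : E) (W : Fin m → E) (v w : E) :
    iteratedFDeriv ℝ m (fun y => iteratedFDeriv ℝ 2 f y ![v, w]) x W
      = iteratedFDeriv ℝ (m + 2) f x (Fin.snoc (Fin.snoc W v) w) := by
  have hF : ContDiff ℝ ∞ (fun y => fderiv ℝ (fderiv ℝ f) y) :=
    (hf.fderiv_right (m := ∞) inf_add_one_le_inf).fderiv_right inf_add_one_le_inf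
  set G : (E →L[ℝ] (E →L[ℝ] ℂ)) →L[ℝ] ℂ :=
    (ContinuousLinearMap.apply ℝ ℂ w).comp (ContinuousLinearMap.apply ℝ (E →L[ℝ] ℂ) v) with hG
  have h1 : (fun y => iteratedFDeriv ℝ 2 f y ![v, w])
      = (⇑G) ∘ (fun y => fderiv ℝ (fderiv ℝ f) y) := by
    funext y
    rw [iteratedFDeriv_two_apply]
    simp [hG]
  rw [h1, G.iteratedFDeriv_comp_left hF.contDiffAt (coe_le_inf m)]
  have h2 : iteratedFDeriv ℝ (m + 2) f x (Fin.snoc (Fin.snoc W v) w)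
      = iteratedFDeriv ℝ m (fun y => fderiv ℝ (fderiv ℝ f) y) x W v w := by
    show iteratedFDeriv ℝ (m + 1 + 1) f x (Fin.snoc (Fin.snoc W v) w) = _
    rw [iteratedFDeriv_succ_apply_right, Fin.init_snoc, Fin.snoc_last,
      iteratedFDeriv_succ_apply_right, Fin.init_snoc, Fin.snoc_last]
  rw [h2]
  simp [hG]

lemma prod_sqrt_nonneg (Q : E → ℝ) {k : ℕ} (V : Fin k → E) :
    0 ≤ ∏ i, Real.sqrt (Q (V i)) :=
  Finset.prod_nonneg fun _ _ => Real.sqrt_nonneg _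

lemma memS_mono (Q : E → ℝ) {f : E → ℂ} {C C' : ℝ} (hle : C ≤ C')
    (hf : MemSWith Q f C) : MemSWith Q f C' :=
  ⟨hf.1, fun m x V => (hf.2 m x V).trans
    (mul_le_mul_of_nonneg_right hle (prod_sqrt_nonneg Q V))⟩

lemma normS_le (Q : E → ℝ) {f : E → ℂ} {C : ℝ} (hC : 0 ≤ C) (h : MemSWith Q f C) :
    normS Q f ≤ C :=
  csInf_le ⟨0, fun _ hy => hy.1⟩ ⟨hC, h⟩

lemma normS_spec (Q : E → ℝ) {f : E → ℂ} (hf : ∃ C, 0 ≤ C ∧ MemSWith Q f C) :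
    0 ≤ normS Q f ∧ MemSWith Q f (normS Q f) := by
  obtain ⟨C₀, hC₀, hm₀⟩ := hf
  have hne : {C : ℝ | 0 ≤ C ∧ MemSWith Q f C}.Nonempty := ⟨C₀, hC₀, hm₀⟩
  have h0 : 0 ≤ normS Q f := le_csInf hne fun C hC => hC.1
  refine ⟨h0, hm₀.1, fun m x V => ?_⟩
  have hp0 : 0 ≤ ∏ i, Real.sqrt (Q (V i)) := prod_sqrt_nonneg Q V
  rcases eq_or_lt_of_le hp0 with hz | hpos
  · have h1 : ‖iteratedFDeriv ℝ m f x V‖ ≤ C₀ * ∏ i, Real.sqrt (Q (V i)) := hm₀.2 m x V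
    rw [← hz] at h1 ⊢
    simpa using h1
  · have h1 : ‖iteratedFDeriv ℝ m f x V‖ / (∏ i, Real.sqrt (Q (V i))) ≤ normS Q f := by
      refine le_csInf hne fun C hC => ?_
      rw [div_le_iff₀ hpos]
      exact hC.2.2 m x V
    calc ‖iteratedFDeriv ℝ m f x V‖
        = (‖iteratedFDeriv ℝ m f x V‖ / (∏ i, Real.sqrt (Q (V i)))) *
            ∏ i, Real.sqrt (Q (V i)) := (div_mul_cancel₀ _ hpos.ne').symm
      _ ≤ normS Q f * ∏ i, Real.sqrt (Q (V i)) :=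
          mul_le_mul_of_nonneg_right h1 hp0

end Aux

section AuxInner

variable {E : Type*} [NormedAddCommGroup E] [InnerProductSpace ℝ E]
variable (A : E →L[ℝ] E) (Q : E → ℝ)

lemma sqrtQ_le (hQ : ∀ v, Q v = ⟪A v, v⟫_ℝ) (v : E) :
    Real.sqrt (Q v) ≤ Real.sqrt ‖A‖ * ‖v‖ := by
  have h1 : Q v ≤ ‖A‖ * ‖v‖ ^ 2 := by
    rw [hQ]
    calc ⟪A v, v⟫_ℝ ≤ ‖A v‖ * ‖v‖ := real_inner_le_norm _ _
      _ ≤ (‖A‖ * ‖v‖) * ‖v‖ :=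
          mul_le_mul_of_nonneg_right (A.le_opNorm v) (norm_nonneg v)
      _ = ‖A‖ * ‖v‖ ^ 2 := by ring
  calc Real.sqrt (Q v) ≤ Real.sqrt (‖A‖ * ‖v‖ ^ 2) := Real.sqrt_le_sqrt h1
    _ = Real.sqrt ‖A‖ * ‖v‖ := by
        rw [Real.sqrt_mul (norm_nonneg A), Real.sqrt_sq (norm_nonneg v)]

lemma opnorm_bound (hQ : ∀ v, Q v = ⟪A v, v⟫_ℝ) {f : E → ℂ} {C : ℝ}
    (hC : 0 ≤ C)
    (hf2 : ∀ (m : ℕ) (x : E) (V : Fin m → E),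
      ‖iteratedFDeriv ℝ m f x V‖ ≤ C * ∏ i, Real.sqrt (Q (V i)))
    (k : ℕ) (x : E) :
    ‖iteratedFDeriv ℝ k f x‖ ≤ C * Real.sqrt ‖A‖ ^ k := by
  refine ContinuousMultilinearMap.opNorm_le_bound
    (mul_nonneg hC (pow_nonneg (Real.sqrt_nonneg _) k)) fun V => ?_
  calc ‖iteratedFDeriv ℝ k f x V‖ ≤ C * ∏ i, Real.sqrt (Q (V i)) := hf2 k x V
    _ ≤ C * ∏ i, (Real.sqrt ‖A‖ * ‖V i‖) := by
        refine mul_le_mul_of_nonneg_left ?_ hC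
        exact Finset.prod_le_prod (fun i _ => Real.sqrt_nonneg _)
          (fun i _ => sqrtQ_le A Q hQ (V i))
    _ = C * Real.sqrt ‖A‖ ^ k * ∏ i, ‖V i‖ := by
        rw [Finset.prod_mul_distrib, Finset.prod_const, Finset.card_univ, Fintype.card_fin]
        ring

lemma memS_tsum (hQ : ∀ v, Q v = ⟪A v, v⟫_ℝ) (F : ℕ → E → ℂ) (D : ℕ → ℝ)
    (hD : ∀ i, 0 ≤ D i) (hF : ∀ i, MemSWith Q (F i) (D i)) (hsum : Summable D) :
    MemSWith Q (fun x => ∑' i, F i x) (∑' i, D i) := by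
  set v : ℕ → ℕ → ℝ := fun k i => D i * Real.sqrt ‖A‖ ^ k with hv_def
  have hv : ∀ k : ℕ, (k : ℕ∞) ≤ (⊤ : ℕ∞) → Summable (v k) := fun k _ => hsum.mul_right _
  have h'f : ∀ (k : ℕ) (i : ℕ) (x : E), (k : ℕ∞) ≤ (⊤ : ℕ∞) →
      ‖iteratedFDeriv ℝ k (F i) x‖ ≤ v k i :=
    fun k i x _ => opnorm_bound A Q hQ (hD i) (hF i).2 k x
  have hFinf : ∀ i, ContDiff ℝ ((⊤:ℕ∞) : WithTop ℕ∞) (F i) := fun i => (hF i).1.of_le (by simp)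
  have hbnd : ∀ (k : ℕ) (x : E) (V : Fin k → E),
      ‖iteratedFDeriv ℝ k (fun x => ∑' i, F i x) x V‖
        ≤ (∑' i, D i) * ∏ j, Real.sqrt (Q (V j)) := by
    intro k x V
    rw [iteratedFDeriv_tsum_apply hFinf hv h'f le_top x]
    have hΦ : Summable (fun i => iteratedFDeriv ℝ k (F i) x) :=
      Summable.of_norm_bounded (hv k le_top) (fun i => h'f k i x le_top)
    rw [ContinuousMultilinearMap.tsum_eval hΦ V]
    have hnorm : ∀ i, ‖iteratedFDeriv ℝ k (F i) x V‖ ≤ D i * ∏ j, Real.sqrt (Q (V j)) :=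
      fun i => (hF i).2 k x V
    have hsum2 : Summable (fun i => D i * ∏ j, Real.sqrt (Q (V j))) := hsum.mul_right _
    have hsum1 : Summable (fun i => ‖iteratedFDeriv ℝ k (F i) x V‖) :=
      Summable.of_nonneg_of_le (fun i => norm_nonneg _) hnorm hsum2
    calc ‖∑' i, iteratedFDeriv ℝ k (F i) x V‖
        ≤ ∑' i, ‖iteratedFDeriv ℝ k (F i) x V‖ := norm_tsum_le_tsum_norm hsum1
      _ ≤ ∑' i, D i * ∏ j, Real.sqrt (Q (V j)) := Summable.tsum_le_tsum hnorm hsum1 hsum2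
      _ = (∑' i, D i) * ∏ j, Real.sqrt (Q (V j)) := tsum_mul_right
  refine ⟨?_, hbnd⟩
  have hsmooth : ContDiff ℝ ((⊤:ℕ∞) : WithTop ℕ∞) (fun x => ∑' i, F i x) :=
    contDiff_tsum hFinf hv h'f
  exact (analytic_of_bounds (Real.sqrt_nonneg ‖A‖) hsmooth
    (fun k x => opnorm_bound A Q hQ (tsum_nonneg hD) hbnd k x)).of_le le_top

lemma memS_d2 (hQ : ∀ v, Q v = ⟪A v, v⟫_ℝ) (hnn : ∀ v : E, 0 ≤ ⟪A v, v⟫_ℝ)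
    {f : E → ℂ} {C : ℝ} (hf : MemSWith Q f C) (v : E) :
    MemSWith Q (fun y => iteratedFDeriv ℝ 2 f y ![v, v]) (C * Q v) := by
  have hQv : 0 ≤ Q v := by rw [hQ]; exact hnn v
  constructor
  · have h1 : ContDiff ℝ ∞ (iteratedFDeriv ℝ 2 f) :=
      hf.1.iteratedFDeriv_right (WithTop.coe_le_coe.mpr le_top)
    have h2 : (fun y => iteratedFDeriv ℝ 2 f y ![v, v])
        = (⇑(ContinuousMultilinearMap.apply ℝ (fun _ : Fin 2 => E) ℂ ![v, v])) ∘
          (iteratedFDeriv ℝ 2 f) := rfl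
    rw [h2]
    exact (ContinuousMultilinearMap.apply ℝ (fun _ : Fin 2 => E) ℂ ![v, v]).contDiff.comp h1
  · intro m x W
    rw [key_shift f hf.1 m x W v v]
    have h1 := hf.2 (m + 2) x (Fin.snoc (Fin.snoc W v) v)
    have hprod : (∏ i, Real.sqrt (Q ((Fin.snoc (Fin.snoc W v) v : Fin (m + 2) → E) i)))
        = (∏ i, Real.sqrt (Q (W i))) * Q v := by
      calc (∏ i, Real.sqrt (Q ((Fin.snoc (Fin.snoc W v) v : Fin (m + 2) → E) i)))
          = (∏ i, Real.sqrt (Q ((Fin.snoc W v : Fin (m + 1) → E) i))) * Real.sqrt (Q v) := by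
            rw [show ((fun i => Real.sqrt (Q ((Fin.snoc (Fin.snoc W v) v : Fin (m+2) → E) i)))
                = Fin.snoc (fun i => Real.sqrt (Q ((Fin.snoc W v : Fin (m+1) → E) i)))
                  (Real.sqrt (Q v)) : _ ) from ?_]
            · exact Fin.prod_snoc _ _
            · funext i
              refine Fin.lastCases ?_ (fun j => ?_) i
              · simp [Fin.snoc_last]
              · simp [Fin.snoc_castSucc]
        _ = ((∏ i, Real.sqrt (Q (W i))) * Real.sqrt (Q v)) * Real.sqrt (Q v) := by
            rw [show ((fun i => Real.sqrt (Q ((Fin.snoc W v : Fin (m+1) → E) i)))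
                = Fin.snoc (fun i => Real.sqrt (Q (W i))) (Real.sqrt (Q v)) : _) from ?_]
            · rw [Fin.prod_snoc]
            · funext i
              refine Fin.lastCases ?_ (fun j => ?_) i
              · simp [Fin.snoc_last]
              · simp [Fin.snoc_castSucc]
        _ = (∏ i, Real.sqrt (Q (W i))) * Q v := by
            rw [mul_assoc, Real.mul_self_sqrt hQv]
    rw [hprod] at h1
    calc ‖iteratedFDeriv ℝ (m + 2) f x (Fin.snoc (Fin.snoc W v) v)‖
        ≤ C * ((∏ i, Real.sqrt (Q (W i))) * Q v) := h1
      _ = C * Q v * ∏ i, Real.sqrt (Q (W i)) := by ring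

lemma memS_smul {f : E → ℂ} {C : ℝ} (Q : E → ℝ) (c : ℝ) (hf : MemSWith Q f C) :
    MemSWith Q (fun x => c • f x) (|c| * C) := by
  refine ⟨hf.1.const_smul c, fun m x V => ?_⟩
  rw [iteratedFDeriv_const_smul_apply' (hf.1.of_le (by exact_mod_cast le_top)).contDiffAt]
  rw [ContinuousMultilinearMap.smul_apply, norm_smul, Real.norm_eq_abs]
  calc |c| * ‖iteratedFDeriv ℝ m f x V‖
      ≤ |c| * (C * ∏ i, Real.sqrt (Q (V i))) :=
        mul_le_mul_of_nonneg_left (hf.2 m x V) (abs_nonneg c)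
    _ = |c| * C * ∏ i, Real.sqrt (Q (V i)) := (mul_assoc _ _ _).symm

end AuxInner

theorem inverse_heat_operator_on_symbol_class
    {E : Type*} [NormedAddCommGroup E] [InnerProductSpace ℝ E]
    [TopologicalSpace.SeparableSpace E] [CompleteSpace E]
    (A : E →L[ℝ] E)
    (hsa : ∀ v w : E, ⟪A v, w⟫_ℝ = ⟪v, A w⟫_ℝ)
    (hnn : ∀ v : E, 0 ≤ ⟪A v, v⟫_ℝ)
    (Q : E → ℝ) (hQ : ∀ v, Q v = ⟪A v, v⟫_ℝ)
    (u : HilbertBasis ℕ ℝ E)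
    (htr : Summable fun j => ⟪A (u j), u j⟫_ℝ)
    (f : E → ℂ) (hf : ∃ C, 0 ≤ C ∧ MemSWith Q f C)
    (h : ℝ) (hh : 0 < h) :
    -- iterated Laplacians stay in the class, with geometric bounds
    (∀ m : ℕ, (∃ C, 0 ≤ C ∧ MemSWith Q ((Lap u)^[m] f) C) ∧
      normS Q ((Lap u)^[m] f) ≤ (∑' j : ℕ, ⟪A (u j), u j⟫_ℝ) ^ m * normS Q f) ∧
    -- the series defining `H_{-h} f` converges absolutely at every point
    (∀ x : E, Summable fun m : ℕ =>
      (h ^ m / (2 ^ m * (m.factorial : ℝ))) * ‖((Lap u)^[m] f) x‖) ∧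
    -- `H_{-h} f` belongs to `S(E,Q)` with the exponential norm bound
    (∃ C, 0 ≤ C ∧ MemSWith Q
      (fun x => ∑' m : ℕ, ((-1 : ℝ) ^ m * h ^ m / (2 ^ m * (m.factorial : ℝ)))
        • ((Lap u)^[m] f) x) C) ∧
    normS Q (fun x => ∑' m : ℕ, ((-1 : ℝ) ^ m * h ^ m / (2 ^ m * (m.factorial : ℝ)))
        • ((Lap u)^[m] f) x)
      ≤ Real.exp ((h / 2) * ∑' j : ℕ, ⟪A (u j), u j⟫_ℝ) * normS Q f := by
  set T : ℝ := ∑' j : ℕ, ⟪A (u j), u j⟫_ℝ with hT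
  have hQu : ∀ j : ℕ, Q (u j) = ⟪A (u j), u j⟫_ℝ := fun j => hQ _
  have hT0 : 0 ≤ T := tsum_nonneg fun j => hnn _
  obtain ⟨h0f, hmf⟩ := normS_spec Q hf
  set Cf : ℝ := normS Q f with hCf
  -- one application of the Laplacian
  have lap_step : ∀ (g : E → ℂ) (C : ℝ), 0 ≤ C → MemSWith Q g C →
      MemSWith Q (Lap u g) (T * C) := by
    intro g C hC hg
    have hterm : ∀ j : ℕ,
        MemSWith Q (fun y => iteratedFDeriv ℝ 2 g y ![u j, u j]) (C * Q (u j)) :=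
      fun j => memS_d2 A Q hQ hnn hg (u j)
    have hDnn : ∀ j : ℕ, 0 ≤ C * Q (u j) :=
      fun j => mul_nonneg hC (by rw [hQu]; exact hnn _)
    have hsumD : Summable (fun j => C * Q (u j)) := by
      have heq : (fun j => C * Q (u j)) = fun j => C * ⟪A (u j), u j⟫_ℝ := by
        funext j; rw [hQu]
      rw [heq]
      exact htr.mul_left C
    have hmem := memS_tsum A Q hQ _ _ hDnn hterm hsumD
    have htsum : (∑' j, C * Q (u j)) = T * C := by
      rw [tsum_mul_left]
      have heq2 : (∑' j, Q (u j)) = T := by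
        rw [hT]; exact tsum_congr fun j => hQu j
      rw [heq2, mul_comm]
    rw [htsum] at hmem
    exact hmem
  -- iterates
  have iter : ∀ m : ℕ, MemSWith Q ((Lap u)^[m] f) (T ^ m * Cf) := by
    intro m
    induction m with
    | zero => simpa using hmf
    | succ n ih =>
      rw [Function.iterate_succ_apply']
      have hstep := lap_step _ _ (mul_nonneg (pow_nonneg hT0 n) h0f) ih
      refine memS_mono Q (le_of_eq ?_) hstep
      ring
  have part1 : ∀ m : ℕ, (∃ C, 0 ≤ C ∧ MemSWith Q ((Lap u)^[m] f) C) ∧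
      normS Q ((Lap u)^[m] f) ≤ T ^ m * normS Q f := by
    intro m
    have hnng : 0 ≤ T ^ m * Cf := mul_nonneg (pow_nonneg hT0 m) h0f
    exact ⟨⟨T ^ m * Cf, hnng, iter m⟩, normS_le Q hnng (iter m)⟩
  -- pointwise bound
  have hpt : ∀ (m : ℕ) (x : E), ‖((Lap u)^[m] f) x‖ ≤ T ^ m * Cf := by
    intro m x
    have h1 := (iter m).2 0 x (fun _ => 0)
    simpa using h1
  have hcoef_nn : ∀ m : ℕ, 0 ≤ h ^ m / (2 ^ m * (m.factorial : ℝ)) := by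
    intro m
    apply div_nonneg (pow_nonneg hh.le m)
    positivity
  -- the dominating summable series
  have hDsum : Summable (fun m : ℕ => (h ^ m / (2 ^ m * (m.factorial : ℝ))) * (T ^ m * Cf)) := by
    have heq : ∀ m : ℕ, ((h * T / 2) ^ m / (m.factorial : ℝ)) * Cf
        = (h ^ m / (2 ^ m * (m.factorial : ℝ))) * (T ^ m * Cf) := by
      intro m
      have hfac : (0 : ℝ) < (m.factorial : ℝ) := by exact_mod_cast m.factorial_pos
      field_simp
      rw [div_pow, mul_pow]; field_simp
    exact ((Real.summable_pow_div_factorial (h * T / 2)).mul_right Cf).congr heq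
  have part2 : ∀ x : E, Summable fun m : ℕ =>
      (h ^ m / (2 ^ m * (m.factorial : ℝ))) * ‖((Lap u)^[m] f) x‖ := by
    intro x
    refine Summable.of_nonneg_of_le
      (fun m => mul_nonneg (hcoef_nn m) (norm_nonneg _))
      (fun m => mul_le_mul_of_nonneg_left (hpt m x) (hcoef_nn m)) hDsum
  -- the heat semigroup sum
  have habs : ∀ m : ℕ, |(-1 : ℝ) ^ m * h ^ m / (2 ^ m * (m.factorial : ℝ))|
      = h ^ m / (2 ^ m * (m.factorial : ℝ)) := by
    intro m
    rw [abs_div, abs_mul, abs_pow, abs_pow, abs_neg, abs_one, one_pow, one_mul,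
      abs_of_pos hh, abs_of_pos (by positivity : (0:ℝ) < 2 ^ m * (m.factorial : ℝ))]
  have hterm3 : ∀ m : ℕ, MemSWith Q
      (fun x => ((-1 : ℝ) ^ m * h ^ m / (2 ^ m * (m.factorial : ℝ))) • ((Lap u)^[m] f) x)
      ((h ^ m / (2 ^ m * (m.factorial : ℝ))) * (T ^ m * Cf)) := by
    intro m
    have h1 := memS_smul Q ((-1 : ℝ) ^ m * h ^ m / (2 ^ m * (m.factorial : ℝ))) (iter m)
    rwa [habs m] at h1
  have hD3nn : ∀ m : ℕ, 0 ≤ (h ^ m / (2 ^ m * (m.factorial : ℝ))) * (T ^ m * Cf) :=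
    fun m => mul_nonneg (hcoef_nn m) (mul_nonneg (pow_nonneg hT0 m) h0f)
  have hmem3 := memS_tsum A Q hQ _ _ hD3nn hterm3 hDsum
  have hsum_eq : (∑' m : ℕ, (h ^ m / (2 ^ m * (m.factorial : ℝ))) * (T ^ m * Cf))
      = Real.exp ((h / 2) * T) * Cf := by
    have heq : ∀ m : ℕ, (h ^ m / (2 ^ m * (m.factorial : ℝ))) * (T ^ m * Cf)
        = ((h * T / 2) ^ m / (m.factorial : ℝ)) * Cf := by
      intro m
      have hfac : (0 : ℝ) < (m.factorial : ℝ) := by exact_mod_cast m.factorial_pos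
      field_simp
      rw [div_pow, mul_pow]; field_simp
    rw [tsum_congr heq, tsum_mul_right]
    congr 1
    have hexp : Real.exp (h * T / 2) = ∑' m : ℕ, (h * T / 2) ^ m / (m.factorial : ℝ) := by
      rw [Real.exp_eq_exp_ℝ, NormedSpace.exp_eq_tsum_div]
    rw [show (h / 2) * T = h * T / 2 by ring, hexp]
  rw [hsum_eq] at hmem3
  have hexp_nn : 0 ≤ Real.exp ((h / 2) * T) * Cf :=
    mul_nonneg (Real.exp_pos _).le h0f
  exact ⟨part1, part2, ⟨Real.exp ((h / 2) * T) * Cf, hexp_nn, hmem3⟩,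
    normS_le Q hexp_nn hmem3⟩

end
end

section
/- Let χ : ℝ → ℂ be a Schwartz function, (e₁,e₂,e₃) the standard basis of ℝ³ and × the cross product. For x ∈ ℝ³ and m ∈ {1,2,3} define B_{mx}(k) := i·(2π)^{−3/2}·χ(|k|)·|k|^{1/2}·e^{−i k·x}·(k×e_m)/|k| for k ≠ 0, E_{mx}(k) := (k × B_{mx}(k))/|k|, and ρ(x) := (2π)^{−3}·∫_{ℝ³} |χ(|k|)|²·cos(k·x) dk. Then: (a) B_{mx} and E_{mx} belong to L²(ℝ³, ℂ³); (b) ρ is well defined and differentiable on ℝ³ with ∇ρ(x) = −(2π)^{−3}·∫_{ℝ³} |χ(|k|)|²·sin(k·x)·k dk; (c) for all x, y ∈ ℝ³ and m, n ∈ {1,2,3}, Im⟨E_{mx}, B_{ny}⟩_{L²(ℝ³,ℂ³)} = ∇ρ(x−y)·(e_m × e_n), and Im⟨B_{mx}, B_{ny}⟩_{L²(ℝ³,ℂ³)} = 0. -/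
open scoped BigOperators
open MeasureTheory

noncomputable section

/-- Points of `ℝ³`. -/
abbrev V3 : Type := Fin 3 → ℝ

/-- The Euclidean norm `|k|` on `ℝ³`. -/
def enorm3 (k : V3) : ℝ := Real.sqrt (∑ i : Fin 3, k i ^ 2)

/-- The Euclidean scalar product `k·x` on `ℝ³`. -/
def dot3 (k x : V3) : ℝ := ∑ i : Fin 3, k i * x i

/-- The standard basis vector `e_m` of `ℝ³`. -/
def stdb (m : Fin 3) : V3 := Pi.single m 1

/-- Cross product of a real vector with a complex vector, componentwise. -/
def crossC (k : V3) (v : Fin 3 → ℂ) : Fin 3 → ℂ :=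
  crossProduct (fun i => (k i : ℂ)) v

/-- The one-photon magnetic field element
`B_{mx}(k) = i (2π)^{-3/2} χ(|k|) |k|^{1/2} e^{-i k·x} (k × e_m)/|k|`. -/
def Bf (χ : SchwartzMap ℝ ℂ) (m : Fin 3) (x : V3) (k : V3) : Fin 3 → ℂ := fun i =>
  Complex.I * (((2 * Real.pi) ^ (3:ℕ) : ℝ) ^ (-(1:ℝ)/2) : ℝ) * χ (enorm3 k)
    * (Real.sqrt (enorm3 k) : ℝ) * Complex.exp (-Complex.I * (dot3 k x : ℝ))
    * ((crossProduct k (stdb m) i / enorm3 k : ℝ) : ℂ)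

/-- The one-photon electric field element `E_{mx}(k) = (k × B_{mx}(k))/|k|`. -/
def Ef (χ : SchwartzMap ℝ ℂ) (m : Fin 3) (x : V3) (k : V3) : Fin 3 → ℂ := fun i =>
  crossC k (Bf χ m x k) i / (enorm3 k : ℂ)

/-- The smeared delta function `ρ(x) = (2π)^{-3} ∫ |χ(|k|)|² cos(k·x) dk`. -/
def rho (χ : SchwartzMap ℝ ℂ) (x : V3) : ℝ :=
  (((2 * Real.pi) ^ (3:ℕ) : ℝ))⁻¹ * ∫ k : V3, ‖χ (enorm3 k)‖ ^ 2 * Real.cos (dot3 k x)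

/-- The gradient `∇ρ(x) = -(2π)^{-3} ∫ |χ(|k|)|² sin(k·x) k dk`, componentwise. -/
def gradRho (χ : SchwartzMap ℝ ℂ) (x : V3) : V3 := fun i =>
  -((((2 * Real.pi) ^ (3:ℕ) : ℝ))⁻¹ * ∫ k : V3, ‖χ (enorm3 k)‖ ^ 2 * Real.sin (dot3 k x) * k i)

/-- The Hermitian `L²(ℝ³,ℂ³)` pairing, antilinear in the second argument. -/
def innerL2 (f g : V3 → Fin 3 → ℂ) : ℂ :=
  ∫ k : V3, ∑ i : Fin 3, f k i * (starRingEnd ℂ) (g k i)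


/-! Both field elements are a common scalar amplitude
`a_x(k) = i (2π)^{-3/2} χ(|k|) |k|^{1/2} e^{-ik·x}` times a real vector of size `O(1)`, so they
are dominated in `L²` by the majorant `|χ(|k|)|² (1 + |k|)`, which is integrable on `ℝ³` because
`χ` decays faster than `(1 + |r|)^{-3}`. The same majorant dominates the `x`-derivative of the
integrand of `ρ`, so `ρ` can be differentiated under the integral sign.

For the brackets, `a_x(k) · conj (a_y(k)) = (2π)^{-3} |χ(|k|)|² |k| e^{-ik·(x-y)}`. The identity
`(k × (k × a)) · (k × b) = |k|² k · (a × b)` turns `∑ᵢ E_{mx,i} conj B_{ny,i}` into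
`(2π)^{-3} |χ(|k|)|² (k · (e_m × e_n)) e^{-ik·(x-y)}`, whose imaginary part integrates to
`∇ρ(x - y) · (e_m × e_n)`. The integrand `∑ᵢ B_{mx,i} conj B_{ny,i}` takes at `-k` the conjugate
of its value at `k`, so its integral is real. -/

open scoped ComplexConjugate Matrix

lemma enorm3_nonneg (k : V3) : 0 ≤ enorm3 k := Real.sqrt_nonneg _

lemma enorm3_sq (k : V3) : enorm3 k ^ 2 = k ⬝ᵥ k := by
  rw [enorm3, Real.sq_sqrt (by positivity)]
  simp [dotProduct, sq]

lemma abs_apply_le_enorm3 (k : V3) (i : Fin 3) : |k i| ≤ enorm3 k :=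
  Real.abs_le_sqrt (Finset.single_le_sum (f := fun j => k j ^ 2) (fun _ _ => sq_nonneg _)
    (Finset.mem_univ i))

lemma norm_le_enorm3 (k : V3) : ‖k‖ ≤ enorm3 k :=
  (pi_norm_le_iff_of_nonneg (enorm3_nonneg k)).2 fun i => abs_apply_le_enorm3 k i

lemma enorm3_eq_zero {k : V3} : enorm3 k = 0 ↔ k = 0 := by
  refine ⟨fun h => ?_, fun h => by simp [h, enorm3]⟩
  rw [← norm_le_zero_iff]
  exact h ▸ norm_le_enorm3 k

lemma enorm3_neg (k : V3) : enorm3 (-k) = enorm3 k := by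
  simp [enorm3]

@[fun_prop]
lemma continuous_enorm3 : Continuous enorm3 := by
  unfold enorm3
  fun_prop

lemma dot3_eq_dotProduct (k x : V3) : dot3 k x = k ⬝ᵥ x := rfl

lemma abs_dot3_le (k v : V3) : |dot3 k v| ≤ 3 * enorm3 k * ‖v‖ :=
  calc |dot3 k v| ≤ ∑ i, |k i * v i| := Finset.abs_sum_le_sum_abs _ _
    _ ≤ ∑ _i : Fin 3, enorm3 k * ‖v‖ := Finset.sum_le_sum fun i _ => by
        rw [abs_mul, ← Real.norm_eq_abs (v i)]
        exact mul_le_mul (abs_apply_le_enorm3 k i) (norm_le_pi_norm v i) (norm_nonneg _)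
          (enorm3_nonneg k)
    _ = 3 * enorm3 k * ‖v‖ := by simp [mul_assoc]

lemma norm_stdb (m : Fin 3) : ‖stdb m‖ = 1 := by
  simp [stdb, Pi.norm_single]

@[fun_prop]
lemma continuous_crossProduct_left (v : Fin 3 → ℝ) : Continuous fun k : Fin 3 → ℝ => k ⨯₃ v :=
  LinearMap.continuous_of_finiteDimensional (crossProduct.flip v)

lemma abs_crossProduct_apply_le (k v : V3) (i : Fin 3) :
    |(k ⨯₃ v) i| ≤ 2 * enorm3 k * ‖v‖ := by
  have hterm : ∀ a b, |k a * v b| ≤ enorm3 k * ‖v‖ := fun a b => by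
    rw [abs_mul, ← Real.norm_eq_abs (v b)]
    exact mul_le_mul (abs_apply_le_enorm3 k a) (norm_le_pi_norm v b) (norm_nonneg _)
      (enorm3_nonneg k)
  fin_cases i <;>
  · simp only [cross_apply]
    refine (abs_sub _ _).trans ?_
    linarith [hterm 1 2, hterm 2 1, hterm 2 0, hterm 0 2, hterm 0 1, hterm 1 0]

lemma norm_crossProduct_le (k v : V3) : ‖k ⨯₃ v‖ ≤ 2 * enorm3 k * ‖v‖ :=
  (pi_norm_le_iff_of_nonneg (by have := enorm3_nonneg k; positivity)).2 fun i =>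
    abs_crossProduct_apply_le k v i

lemma cross_cross_dotProduct_cross {R : Type*} [CommRing R] (k a b : Fin 3 → R) :
    (k ⨯₃ (k ⨯₃ a)) ⬝ᵥ (k ⨯₃ b) = (k ⬝ᵥ k) * (k ⬝ᵥ (a ⨯₃ b)) := by
  simp [cross_apply, dotProduct, Fin.sum_univ_three]
  ring

lemma crossC_mul_ofReal (k w : V3) (a : ℂ) :
    crossC k (fun j => a * (w j : ℂ)) = fun i => a * ((k ⨯₃ w) i : ℂ) := by
  ext i
  fin_cases i <;> simp [crossC, cross_apply] <;> ring

lemma rpow_neg_one_half_sq {t : ℝ} (ht : 0 ≤ t) : (t ^ (-(1:ℝ)/2)) ^ 2 = t⁻¹ := by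
  rw [← Real.rpow_natCast, ← Real.rpow_mul ht]
  norm_num [Real.rpow_neg_one]

lemma norm_exp_neg_I_mul_ofReal (t : ℝ) : ‖Complex.exp (-Complex.I * t)‖ = 1 := by
  rw [neg_mul, ← mul_neg, ← Complex.ofReal_neg, Complex.norm_exp_I_mul_ofReal]

lemma im_ofReal_mul_exp_neg_I_mul (a t : ℝ) :
    ((a : ℂ) * Complex.exp (-Complex.I * t)).im = -(a * Real.sin t) := by
  rw [Complex.im_ofReal_mul, neg_mul, ← mul_neg, ← Complex.ofReal_neg, mul_comm Complex.I,
    Complex.exp_ofReal_mul_I_im, Real.sin_neg, mul_neg]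

lemma ofReal_mul_exp_dot3_neg (a : ℝ) (k z : V3) :
    (a : ℂ) * Complex.exp (-Complex.I * (dot3 (-k) z : ℝ))
      = conj ((a : ℂ) * Complex.exp (-Complex.I * (dot3 k z : ℝ))) := by
  simp [← Complex.exp_conj, dot3]

lemma norm_mul_ofReal_div_le {ι : Type*} [Fintype ι] (a : ℂ) (u : ι → ℝ) {s C : ℝ} (hs : 0 ≤ s)
    (hC : 0 ≤ C) (h : ∀ i, |u i| ≤ C * s) : ‖fun i => a * ((u i / s : ℝ) : ℂ)‖ ≤ C * ‖a‖ := by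
  refine (pi_norm_le_iff_of_nonneg (by positivity)).2 fun i => ?_
  rw [norm_mul, Complex.norm_real, Real.norm_eq_abs, abs_div, abs_of_nonneg hs, mul_comm C]
  exact mul_le_mul_of_nonneg_left (div_le_of_le_mul₀ hs hC (h i)) (norm_nonneg a)

lemma sum_mul_ofReal_div_mul_conj {ι : Type*} [Fintype ι] (a b : ℂ) (u v : ι → ℝ) (s t : ℝ) :
    ∑ i, a * ((u i / s : ℝ) : ℂ) * conj (b * ((v i / t : ℝ) : ℂ))
      = a * conj b * (((u ⬝ᵥ v) / (s * t) : ℝ) : ℂ) := by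
  simp only [map_mul, Complex.conj_ofReal, dotProduct, Finset.sum_div, Complex.ofReal_sum,
    Finset.mul_sum]
  refine Finset.sum_congr rfl fun i _ => ?_
  push_cast
  ring

lemma SchwartzMap.exists_one_add_norm_pow_mul_le {E F : Type*} [NormedAddCommGroup E]
    [NormedSpace ℝ E] [NormedAddCommGroup F] [NormedSpace ℝ F] (f : SchwartzMap E F) (n : ℕ) :
    ∃ C, ∀ x, (1 + ‖x‖) ^ n * ‖f x‖ ≤ C :=
  ⟨_, fun x => by
    simpa using f.one_add_le_sup_seminorm_apply (𝕜 := ℝ) (m := (n, 0)) le_rfl le_rfl x⟩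

section Fields

variable (χ : SchwartzMap ℝ ℂ)

def radialMajorant (k : V3) : ℝ := ‖χ (enorm3 k)‖ ^ 2 * (1 + enorm3 k)

lemma integrable_radialMajorant : Integrable (radialMajorant χ) := by
  obtain ⟨C, hC⟩ := χ.exists_one_add_norm_pow_mul_le 3
  refine ((integrable_one_add_norm (E := V3) (μ := volume) (r := 4) (by norm_num)).const_mul
    (C ^ 2)).mono' (by unfold radialMajorant; fun_prop) (ae_of_all _ fun k => ?_)
  set e := enorm3 k
  have he : 0 ≤ e := enorm3_nonneg k
  have hdecay : (1 + e) ^ 3 * ‖χ e‖ ≤ C := by simpa [abs_of_nonneg he] using hC e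
  have hk : 1 + ‖k‖ ≤ 1 + e := by linarith [norm_le_enorm3 k]
  rw [Real.norm_of_nonneg (by unfold radialMajorant; positivity), Real.rpow_neg (by positivity),
    Real.rpow_ofNat, ← div_eq_mul_inv, le_div_iff₀ (by positivity)]
  calc radialMajorant χ k * (1 + ‖k‖) ^ 4 ≤ ‖χ e‖ ^ 2 * (1 + e) * (1 + e) ^ 4 := by
        unfold radialMajorant; gcongr
    _ ≤ ((1 + e) ^ 3 * ‖χ e‖) ^ 2 := by
        rw [mul_pow, ← pow_mul]
        nlinarith [pow_le_pow_right₀ (le_add_of_nonneg_right he) (show 5 ≤ 3 * 2 by norm_num),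
          sq_nonneg ‖χ e‖]
    _ ≤ C ^ 2 := pow_le_pow_left₀ (by positivity) hdecay 2

lemma abs_normSq_mul_le_radialMajorant {k : V3} {a C : ℝ} (h : |a| ≤ C * (1 + enorm3 k)) :
    |‖χ (enorm3 k)‖ ^ 2 * a| ≤ C * radialMajorant χ k := by
  rw [abs_mul, abs_of_nonneg (by positivity), radialMajorant]
  calc ‖χ (enorm3 k)‖ ^ 2 * |a| ≤ ‖χ (enorm3 k)‖ ^ 2 * (C * (1 + enorm3 k)) := by gcongr
    _ = C * (‖χ (enorm3 k)‖ ^ 2 * (1 + enorm3 k)) := by ring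

lemma integrable_of_norm_le_radialMajorant {E : Type*} [NormedAddCommGroup E] {f : V3 → E}
    (hf : AEStronglyMeasurable f) (C : ℝ) (h : ∀ k, ‖f k‖ ≤ C * radialMajorant χ k) :
    Integrable f :=
  ((integrable_radialMajorant χ).const_mul C).mono' hf (ae_of_all _ h)

def fieldAmplitude (x k : V3) : ℂ :=
  Complex.I * (((2 * Real.pi) ^ (3:ℕ) : ℝ) ^ (-(1:ℝ)/2) : ℝ) * χ (enorm3 k)
    * (Real.sqrt (enorm3 k) : ℝ) * Complex.exp (-Complex.I * (dot3 k x : ℝ))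

lemma Bf_apply (m : Fin 3) (x k : V3) (i : Fin 3) :
    Bf χ m x k i = fieldAmplitude χ x k * (((k ⨯₃ stdb m) i / enorm3 k : ℝ) : ℂ) := rfl

lemma Ef_apply (m : Fin 3) (x k : V3) (i : Fin 3) :
    Ef χ m x k i
      = fieldAmplitude χ x k * (((k ⨯₃ (k ⨯₃ stdb m)) i / enorm3 k ^ 2 : ℝ) : ℂ) := by
  rw [Ef, funext (Bf_apply χ m x k), crossC_mul_ofReal]
  fin_cases i <;> simp [cross_apply] <;> ring

lemma norm_fieldAmplitude (x k : V3) :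
    ‖fieldAmplitude χ x k‖
      = ((2 * Real.pi) ^ (3:ℕ)) ^ (-(1:ℝ)/2) * (‖χ (enorm3 k)‖ * Real.sqrt (enorm3 k)) := by
  simp only [fieldAmplitude, norm_mul, Complex.norm_I, norm_exp_neg_I_mul_ofReal,
    Complex.norm_real, Real.norm_of_nonneg (Real.sqrt_nonneg _),
    Real.norm_of_nonneg (by positivity : (0:ℝ) ≤ ((2 * Real.pi) ^ (3:ℕ)) ^ (-(1:ℝ)/2))]
  ring

lemma fieldAmplitude_mul_conj (x y k : V3) :
    fieldAmplitude χ x k * conj (fieldAmplitude χ y k)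
      = ((((2 * Real.pi) ^ (3:ℕ))⁻¹ * ‖χ (enorm3 k)‖ ^ 2 * enorm3 k : ℝ) : ℂ)
        * Complex.exp (-Complex.I * (dot3 k (x - y) : ℝ)) := by
  set c : ℝ := ((2 * Real.pi) ^ (3:ℕ)) ^ (-(1:ℝ)/2)
  set s : ℝ := Real.sqrt (enorm3 k)
  have hexp : Complex.exp (-Complex.I * (dot3 k (x - y) : ℝ)) = Complex.exp
      (-Complex.I * (dot3 k x : ℝ)) * conj (Complex.exp (-Complex.I * (dot3 k y : ℝ))) := by
    rw [← Complex.exp_conj, ← Complex.exp_add,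
      show dot3 k (x - y) = dot3 k x - dot3 k y from dotProduct_sub k x y]
    congr 1
    simp
    ring
  have hc : c * c = ((2 * Real.pi) ^ (3:ℕ))⁻¹ := by
    rw [← sq]
    exact rpow_neg_one_half_sq (by positivity)
  calc fieldAmplitude χ x k * conj (fieldAmplitude χ y k)
      = (Complex.I * conj Complex.I) * ((c * c : ℝ) : ℂ) * (χ (enorm3 k) * conj (χ (enorm3 k)))
          * ((s * s : ℝ) : ℂ) * (Complex.exp (-Complex.I * (dot3 k x : ℝ))
            * conj (Complex.exp (-Complex.I * (dot3 k y : ℝ)))) := by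
        simp only [fieldAmplitude, map_mul, Complex.conj_ofReal, Complex.ofReal_mul]
        ring
    _ = _ := by
        rw [hc, Real.mul_self_sqrt (enorm3_nonneg k), Complex.mul_conj', Complex.mul_conj',
          ← hexp]
        simp

lemma norm_Bf_le (m : Fin 3) (x k : V3) : ‖Bf χ m x k‖ ≤ 2 * ‖fieldAmplitude χ x k‖ :=
  norm_mul_ofReal_div_le _ _ (enorm3_nonneg k) zero_le_two fun i => by
    simpa [norm_stdb] using abs_crossProduct_apply_le k (stdb m) i

lemma norm_Ef_le (m : Fin 3) (x k : V3) : ‖Ef χ m x k‖ ≤ 4 * ‖fieldAmplitude χ x k‖ := by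
  rw [funext (Ef_apply χ m x k)]
  refine norm_mul_ofReal_div_le _ _ (sq_nonneg _) zero_le_four fun i => ?_
  calc |(k ⨯₃ (k ⨯₃ stdb m)) i| ≤ 2 * enorm3 k * ‖k ⨯₃ stdb m‖ :=
        abs_crossProduct_apply_le _ _ i
    _ ≤ 2 * enorm3 k * (2 * enorm3 k * ‖stdb m‖) := by
        have := enorm3_nonneg k
        gcongr
        exact norm_crossProduct_le _ _
    _ = 4 * enorm3 k ^ 2 := by rw [norm_stdb]; ring

lemma memLp_two_norm_mul_sqrt :
    MemLp (fun k : V3 => ‖χ (enorm3 k)‖ * Real.sqrt (enorm3 k)) 2 := by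
  refine (memLp_two_iff_integrable_sq (by fun_prop)).2
    (integrable_of_norm_le_radialMajorant χ (by fun_prop) 1 fun k => ?_)
  rw [mul_pow, Real.sq_sqrt (enorm3_nonneg k), Real.norm_eq_abs]
  exact abs_normSq_mul_le_radialMajorant χ
    (by rw [abs_of_nonneg (enorm3_nonneg k)]; linarith)

lemma memLp_of_norm_le_fieldAmplitude (x : V3) {f : V3 → Fin 3 → ℂ} (hf : Measurable f) (C : ℝ)
    (h : ∀ k, ‖f k‖ ≤ C * ‖fieldAmplitude χ x k‖) : MemLp f 2 := by
  refine (memLp_two_norm_mul_sqrt χ).of_le_mul (c := C * ((2 * Real.pi) ^ (3:ℕ)) ^ (-(1:ℝ)/2))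
    hf.aestronglyMeasurable (ae_of_all _ fun k => ?_)
  rw [Real.norm_of_nonneg (by positivity), mul_assoc, ← norm_fieldAmplitude]
  exact h k

lemma memLp_Bf (m : Fin 3) (x : V3) : MemLp (Bf χ m x) 2 :=
  memLp_of_norm_le_fieldAmplitude χ x (by unfold Bf dot3; fun_prop) 2 (norm_Bf_le χ m x)

lemma memLp_Ef (m : Fin 3) (x : V3) : MemLp (Ef χ m x) 2 :=
  memLp_of_norm_le_fieldAmplitude χ x (by unfold Ef crossC Bf dot3; fun_prop) 4
    (norm_Ef_le χ m x)

lemma integrable_rho_integrand (x : V3) :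
    Integrable (fun k : V3 => ‖χ (enorm3 k)‖ ^ 2 * Real.cos (dot3 k x)) :=
  integrable_of_norm_le_radialMajorant χ (by unfold dot3; fun_prop) 1 fun k =>
    abs_normSq_mul_le_radialMajorant χ
      (by linarith [Real.abs_cos_le_one (dot3 k x), enorm3_nonneg k])

lemma integrable_gradRho_integrand (x : V3) (i : Fin 3) :
    Integrable (fun k : V3 => ‖χ (enorm3 k)‖ ^ 2 * Real.sin (dot3 k x) * k i) :=
  integrable_of_norm_le_radialMajorant χ (by unfold dot3; fun_prop) 1 fun k => by
    rw [Real.norm_eq_abs, mul_assoc]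
    refine abs_normSq_mul_le_radialMajorant χ ?_
    rw [abs_mul]
    nlinarith [Real.abs_sin_le_one (dot3 k x), abs_apply_le_enorm3 k i, abs_nonneg (k i),
      abs_nonneg (Real.sin (dot3 k x))]

lemma dot3_gradRho (z w : V3) :
    dot3 (gradRho χ z) w = -(((2 * Real.pi) ^ (3:ℕ))⁻¹
      * ∫ k, ‖χ (enorm3 k)‖ ^ 2 * Real.sin (dot3 k z) * dot3 k w) := by
  have hsplit : ∀ k : V3, ‖χ (enorm3 k)‖ ^ 2 * Real.sin (dot3 k z) * dot3 k w
      = ∑ i, ‖χ (enorm3 k)‖ ^ 2 * Real.sin (dot3 k z) * k i * w i := fun k => by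
    simp only [dot3, Finset.mul_sum, mul_assoc]
  simp_rw [hsplit]
  rw [integral_finsetSum _ fun i _ => (integrable_gradRho_integrand χ z i).mul_const (w i)]
  simp only [dot3, gradRho, integral_mul_const, Finset.mul_sum, ← Finset.sum_neg_distrib]
  refine Finset.sum_congr rfl fun i _ => ?_
  ring

def dot3CLM (k : V3) : V3 →L[ℝ] ℝ := ∑ i, k i • ContinuousLinearMap.proj i

lemma dot3CLM_apply (k v : V3) : dot3CLM k v = dot3 k v := by
  simp [dot3CLM, dot3]

lemma norm_dot3CLM_le (k : V3) : ‖dot3CLM k‖ ≤ 3 * enorm3 k :=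
  ContinuousLinearMap.opNorm_le_bound _ (by have := enorm3_nonneg k; positivity) fun v => by
    rw [dot3CLM_apply, Real.norm_eq_abs]
    exact abs_dot3_le k v

@[fun_prop]
lemma continuous_dot3CLM : Continuous dot3CLM := by
  unfold dot3CLM
  fun_prop

def rhoIntegrandDeriv (x k : V3) : V3 →L[ℝ] ℝ :=
  (-(‖χ (enorm3 k)‖ ^ 2 * Real.sin (dot3 k x))) • dot3CLM k

lemma hasFDerivAt_rho_integrand (k x : V3) :
    HasFDerivAt (fun x => ‖χ (enorm3 k)‖ ^ 2 * Real.cos (dot3 k x)) (rhoIntegrandDeriv χ x k) x := by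
  have hdot : HasFDerivAt (dot3 k) (dot3CLM k) x := by
    rw [show dot3 k = dot3CLM k from funext fun v => (dot3CLM_apply k v).symm]
    exact (dot3CLM k).hasFDerivAt
  have := ((Real.hasDerivAt_cos _).comp_hasFDerivAt x hdot).const_mul (‖χ (enorm3 k)‖ ^ 2)
  rwa [smul_smul, mul_neg] at this

lemma norm_rhoIntegrandDeriv_le (x k : V3) :
    ‖rhoIntegrandDeriv χ x k‖ ≤ 3 * radialMajorant χ k := by
  rw [rhoIntegrandDeriv, norm_smul, norm_neg, Real.norm_eq_abs,
    ← abs_of_nonneg (norm_nonneg (dot3CLM k)), ← abs_mul, mul_assoc]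
  refine abs_normSq_mul_le_radialMajorant χ ?_
  rw [abs_mul, abs_of_nonneg (norm_nonneg _)]
  nlinarith [Real.abs_sin_le_one (dot3 k x), norm_dot3CLM_le k, norm_nonneg (dot3CLM k),
    abs_nonneg (Real.sin (dot3 k x)), enorm3_nonneg k]

lemma integrable_rhoIntegrandDeriv (x : V3) : Integrable (rhoIntegrandDeriv χ x) :=
  integrable_of_norm_le_radialMajorant χ (by unfold rhoIntegrandDeriv dot3; fun_prop) 3
    (norm_rhoIntegrandDeriv_le χ x)

lemma hasFDerivAt_rho (x : V3) :
    HasFDerivAt (rho χ) (((2 * Real.pi) ^ (3:ℕ))⁻¹ • ∫ k, rhoIntegrandDeriv χ x k) x :=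
  (hasFDerivAt_integral_of_dominated_of_fderiv_le Filter.univ_mem
    (Filter.Eventually.of_forall fun x => (integrable_rho_integrand χ x).aestronglyMeasurable)
    (integrable_rho_integrand χ x) (integrable_rhoIntegrandDeriv χ x).aestronglyMeasurable
    (ae_of_all _ fun k x _ => norm_rhoIntegrandDeriv_le χ x k)
    ((integrable_radialMajorant χ).const_mul 3)
    (ae_of_all _ fun k x _ => hasFDerivAt_rho_integrand χ k x)).const_mul _

lemma fderiv_rho_apply (x v : V3) : fderiv ℝ (rho χ) x v = dot3 (gradRho χ x) v := by
  rw [(hasFDerivAt_rho χ x).fderiv, smul_apply,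
    ContinuousLinearMap.integral_apply (integrable_rhoIntegrandDeriv χ x), dot3_gradRho]
  simp only [rhoIntegrandDeriv, smul_apply, dot3CLM_apply, smul_eq_mul, neg_mul, integral_neg]
  ring

lemma sum_Ef_mul_conj_Bf (m n : Fin 3) (x y k : V3) :
    ∑ i, Ef χ m x k i * conj (Bf χ n y k i)
      = ((((2 * Real.pi) ^ (3:ℕ))⁻¹ * (‖χ (enorm3 k)‖ ^ 2 * dot3 k (stdb m ⨯₃ stdb n)) : ℝ) : ℂ)
        * Complex.exp (-Complex.I * (dot3 k (x - y) : ℝ)) := by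
  simp only [Ef_apply, Bf_apply]
  rw [sum_mul_ofReal_div_mul_conj, fieldAmplitude_mul_conj, cross_cross_dotProduct_cross,
    ← enorm3_sq, dot3_eq_dotProduct k (stdb m ⨯₃ stdb n)]
  rcases eq_or_ne k 0 with rfl | hk
  · simp [enorm3]
  · have he : (enorm3 k : ℂ) ≠ 0 := Complex.ofReal_ne_zero.2 (mt enorm3_eq_zero.1 hk)
    push_cast
    field_simp

lemma sum_Bf_mul_conj_Bf (m n : Fin 3) (x y k : V3) :
    ∑ i, Bf χ m x k i * conj (Bf χ n y k i)
      = ((((2 * Real.pi) ^ (3:ℕ))⁻¹ * ‖χ (enorm3 k)‖ ^ 2 * enorm3 k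
          * ((k ⨯₃ stdb m) ⬝ᵥ (k ⨯₃ stdb n) / (enorm3 k * enorm3 k)) : ℝ) : ℂ)
        * Complex.exp (-Complex.I * (dot3 k (x - y) : ℝ)) := by
  simp only [Bf_apply]
  rw [sum_mul_ofReal_div_mul_conj, fieldAmplitude_mul_conj]
  push_cast
  ring

lemma sum_Bf_mul_conj_Bf_neg (m n : Fin 3) (x y k : V3) :
    ∑ i, Bf χ m x (-k) i * conj (Bf χ n y (-k) i)
      = conj (∑ i, Bf χ m x k i * conj (Bf χ n y k i)) := by
  rw [sum_Bf_mul_conj_Bf, sum_Bf_mul_conj_Bf, ← ofReal_mul_exp_dot3_neg, enorm3_neg,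
    LinearMap.map_neg₂, LinearMap.map_neg₂, neg_dotProduct, dotProduct_neg, neg_neg]

lemma im_innerL2_Ef_Bf (x y : V3) (m n : Fin 3) :
    (innerL2 (Ef χ m x) (Bf χ n y)).im = dot3 (gradRho χ (x - y)) (stdb m ⨯₃ stdb n) := by
  set c : ℝ := ((2 * Real.pi) ^ (3:ℕ))⁻¹
  set w := stdb m ⨯₃ stdb n
  have hint : Integrable fun k => ((c * (‖χ (enorm3 k)‖ ^ 2 * dot3 k w) : ℝ) : ℂ)
      * Complex.exp (-Complex.I * (dot3 k (x - y) : ℝ)) :=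
    integrable_of_norm_le_radialMajorant χ (by unfold dot3; fun_prop) (c * (3 * ‖w‖)) fun k => by
      rw [norm_mul, norm_exp_neg_I_mul_ofReal, mul_one, Complex.norm_real, Real.norm_eq_abs,
        abs_mul, abs_of_nonneg (by positivity : 0 ≤ c), mul_assoc]
      refine mul_le_mul_of_nonneg_left (abs_normSq_mul_le_radialMajorant χ ?_) (by positivity)
      nlinarith [abs_dot3_le k w, norm_nonneg w, enorm3_nonneg k]
  have him := integral_im hint
  simp only [RCLike.im_to_complex, im_ofReal_mul_exp_neg_I_mul] at him
  rw [innerL2, funext fun k => sum_Ef_mul_conj_Bf χ m n x y k, ← him, dot3_gradRho,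
    ← integral_const_mul, ← integral_neg]
  congr 1 with k
  ring

lemma im_innerL2_Bf_Bf (x y : V3) (m n : Fin 3) : (innerL2 (Bf χ m x) (Bf χ n y)).im = 0 := by
  have hconj : conj (innerL2 (Bf χ m x) (Bf χ n y)) = innerL2 (Bf χ m x) (Bf χ n y) := by
    rw [innerL2, ← integral_conj, ← integral_neg_eq_self]
    simp_rw [sum_Bf_mul_conj_Bf_neg, Complex.conj_conj]
  exact Complex.conj_eq_iff_im.1 hconj

end Fields

theorem field_elements_L2_and_poisson_brackets (χ : SchwartzMap ℝ ℂ) :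
    -- (a) the field elements are square integrable
    (∀ (m : Fin 3) (x : V3), MemLp (Bf χ m x) 2 (volume : Measure V3)) ∧
    (∀ (m : Fin 3) (x : V3), MemLp (Ef χ m x) 2 (volume : Measure V3)) ∧
    -- (b) `ρ` is well defined and differentiable, with gradient `gradRho`
    (∀ x : V3, Integrable (fun k : V3 => ‖χ (enorm3 k)‖ ^ 2 * Real.cos (dot3 k x))) ∧
    (∀ (x : V3) (i : Fin 3),
      Integrable (fun k : V3 => ‖χ (enorm3 k)‖ ^ 2 * Real.sin (dot3 k x) * k i)) ∧
    (∀ x : V3, DifferentiableAt ℝ (rho χ) x) ∧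
    (∀ x v : V3, fderiv ℝ (rho χ) x v = dot3 (gradRho χ x) v) ∧
    -- (c) the Poisson-bracket identities
    (∀ (x y : V3) (m n : Fin 3),
      (innerL2 (Ef χ m x) (Bf χ n y)).im
        = dot3 (gradRho χ (x - y)) (crossProduct (stdb m) (stdb n))) ∧
    (∀ (x y : V3) (m n : Fin 3),
      (innerL2 (Bf χ m x) (Bf χ n y)).im = 0) := by
  exact ⟨memLp_Bf χ, memLp_Ef χ, integrable_rho_integrand χ, integrable_gradRho_integrand χ,
    fun x => (hasFDerivAt_rho χ x).differentiableAt, fderiv_rho_apply χ, im_innerL2_Ef_Bf χ,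
    im_innerL2_Bf_Bf χ⟩

end
end

section
/- Let (c_j)_{j∈ℕ} be a summable family of nonnegative real numbers. For every m ∈ ℕ, the family, indexed by the finitely supported multi-indices α : ℕ → ℕ with |α| = m, of the numbers (1/α!)·∏_j c_j^{α_j} is summable, with sum equal to (1/m!)·(∑_j c_j)^m. -/
open scoped BigOperators NNReal ENNReal
open Finset

namespace MultiIdxAux

noncomputable section

/-- supremum commutes with pow for monotone families over directed nonempty index. -/
lemma iSup_pow_of_monotone (F : Finset ℕ → ℝ≥0∞) (hF : Monotone F) (m : ℕ) :
    (⨆ s, F s) ^ m = ⨆ s, F s ^ m := by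
  induction m with
  | zero => simp
  | succ n ih =>
      rw [pow_succ, ih, ENNReal.iSup_mul]
      simp_rw [ENNReal.mul_iSup]
      apply le_antisymm
      · refine iSup_le fun s => iSup_le fun t => ?_
        refine le_iSup_of_le (s ∪ t) ?_
        rw [pow_succ]
        exact mul_le_mul' (pow_le_pow_left' (hF (subset_union_left (s₁ := s) (s₂ := t))) n)
          (hF subset_union_right)
      · refine iSup_le fun s => ?_
        exact le_iSup_of_le s (le_iSup_of_le s (le_of_eq (pow_succ _ _)))

variable (e : ℕ → ℝ≥0∞) (m : ℕ)

lemma sum_eq_of_support_subset (α : ℕ →₀ ℕ) (s : Finset ℕ) (hs : α.support ⊆ s)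
    (hα : α.sum (fun _ n => n) = m) : ∑ j ∈ s, α j = m := by
  rw [← hα, Finsupp.sum]
  exact (Finset.sum_subset hs fun i _ hi => Finsupp.notMem_support_iff.1 hi).symm

lemma term_eq (α : ℕ →₀ ℕ) (s : Finset ℕ) (hs : α.support ⊆ s)
    (hα : α.sum (fun _ n => n) = m) :
    (m.factorial : ℝ≥0∞) * (α.prod fun _ n => (n.factorial : ℝ≥0∞))⁻¹ *
        α.prod (fun j n => e j ^ n)
      = (Nat.multinomial s α : ℝ≥0∞) * ∏ j ∈ s, e j ^ α j := by
  have hprod : (α.prod fun _ n => (n.factorial : ℝ≥0∞)) = ∏ j ∈ s, ((α j).factorial : ℝ≥0∞) := by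
    rw [Finsupp.prod]
    exact Finset.prod_subset hs fun i _ hi => by
      rw [Finsupp.notMem_support_iff.1 hi]; simp
  have hprod2 : α.prod (fun j n => e j ^ n) = ∏ j ∈ s, e j ^ α j := by
    rw [Finsupp.prod]
    exact Finset.prod_subset hs fun i _ hi => by
      rw [Finsupp.notMem_support_iff.1 hi]; simp
  have hspec : ((∏ j ∈ s, ((α j).factorial : ℝ≥0∞)) * (Nat.multinomial s α : ℝ≥0∞))
      = (m.factorial : ℝ≥0∞) := by
    rw [← Nat.cast_prod, ← Nat.cast_mul, Nat.multinomial_spec,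
      sum_eq_of_support_subset m α s hs hα]
  have hP0 : (∏ j ∈ s, ((α j).factorial : ℝ≥0∞)) ≠ 0 := by
    refine Finset.prod_ne_zero_iff.2 fun i _ => ?_
    exact_mod_cast (Nat.factorial_pos _).ne'
  have hPtop : (∏ j ∈ s, ((α j).factorial : ℝ≥0∞)) ≠ ⊤ := by
    exact (ENNReal.prod_lt_top fun i _ => ENNReal.natCast_lt_top _).ne
  rw [hprod, hprod2]
  congr 1
  rw [← hspec, mul_comm (∏ j ∈ s, ((α j).factorial : ℝ≥0∞)), mul_assoc,
    ENNReal.mul_inv_cancel hP0 hPtop, mul_one]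

lemma key :
    ∑' α : {α : ℕ →₀ ℕ // α.sum (fun _ n => n) = m},
        (m.factorial : ℝ≥0∞) * (α.1.prod fun _ n => (n.factorial : ℝ≥0∞))⁻¹ *
          α.1.prod (fun j n => e j ^ n)
      = (∑' j, e j) ^ m := by
  classical
  set S := {α : ℕ →₀ ℕ // α.sum (fun _ n => n) = m}
  set g : S → ℝ≥0∞ := fun α =>
    (m.factorial : ℝ≥0∞) * (α.1.prod fun _ n => (n.factorial : ℝ≥0∞))⁻¹ *
      α.1.prod (fun j n => e j ^ n) with hg
  apply le_antisymm
  · rw [ENNReal.tsum_eq_iSup_sum]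
    refine iSup_le fun t => ?_
    set s : Finset ℕ := t.sup fun α => α.1.support with hs
    have hsub : ∀ α ∈ t, (α : S).1.support ⊆ s := fun α hα =>
      Finset.le_sup (f := fun α : S => α.1.support) hα
    calc ∑ α ∈ t, g α
        = ∑ α ∈ t, (Nat.multinomial s α.1 : ℝ≥0∞) * ∏ j ∈ s, e j ^ α.1 j := by
          refine Finset.sum_congr rfl fun α hα => ?_
          exact term_eq e m α.1 s (hsub α hα) α.2
      _ = ∑ k ∈ t.image (fun α : S => (α.1 : ℕ → ℕ)),
            (Nat.multinomial s k : ℝ≥0∞) * ∏ j ∈ s, e j ^ k j := by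
          rw [Finset.sum_image]
          intro a _ b _ hab
          exact Subtype.ext (DFunLike.coe_injective hab)
      _ ≤ ∑ k ∈ piAntidiag s m, (Nat.multinomial s k : ℝ≥0∞) * ∏ j ∈ s, e j ^ k j := by
          refine Finset.sum_le_sum_of_subset fun k hk => ?_
          simp only [Finset.mem_image] at hk
          obtain ⟨α, hα, rfl⟩ := hk
          rw [mem_piAntidiag]
          exact ⟨sum_eq_of_support_subset m α.1 s (hsub α hα) α.2,
            fun i hi => hsub α hα (Finsupp.mem_support_iff.2 hi)⟩
      _ = (∑ j ∈ s, e j) ^ m := (Finset.sum_pow_eq_sum_piAntidiag s e m).symm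
      _ ≤ (∑' j, e j) ^ m := pow_le_pow_left' (ENNReal.sum_le_tsum s) m
  · have hmono : Monotone (fun s : Finset ℕ => ∑ a ∈ s, e a) :=
      fun s t hst => Finset.sum_le_sum_of_subset (f := e) hst
    rw [ENNReal.tsum_eq_iSup_sum, iSup_pow_of_monotone (fun s => ∑ a ∈ s, e a) hmono m]
    refine iSup_le fun s => ?_
    rw [Finset.sum_pow_eq_sum_piAntidiag s e m]
    have : ∀ x : {k // k ∈ piAntidiag s m},
        ∃ β : S, (β.1 : ℕ → ℕ) = x.1 ∧
          (Nat.multinomial s x.1 : ℝ≥0∞) * ∏ j ∈ s, e j ^ x.1 j = g β := by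
      rintro ⟨k, hk⟩
      rw [mem_piAntidiag] at hk
      have hsum' : (Finsupp.onFinset s k hk.2).sum (fun _ n => n) = m := by
        rw [Finsupp.sum]
        refine (Finset.sum_subset Finsupp.support_onFinset_subset
          (fun i _ hi => Finsupp.notMem_support_iff.1 hi)).trans ?_
        simpa using hk.1
      refine ⟨⟨Finsupp.onFinset s k hk.2, hsum'⟩, rfl, ?_⟩
      exact (term_eq e m _ s Finsupp.support_onFinset_subset hsum').symm
    choose Ψ hΨ1 hΨ2 using this
    calc ∑ k ∈ piAntidiag s m, (Nat.multinomial s k : ℝ≥0∞) * ∏ j ∈ s, e j ^ k j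
        = ∑ x ∈ (piAntidiag s m).attach,
            (Nat.multinomial s x.1 : ℝ≥0∞) * ∏ j ∈ s, e j ^ x.1 j :=
          (Finset.sum_attach _ fun k => (Nat.multinomial s k : ℝ≥0∞) * ∏ j ∈ s, e j ^ k j).symm
      _ = ∑ x ∈ (piAntidiag s m).attach, g (Ψ x) := Finset.sum_congr rfl fun x _ => hΨ2 x
      _ = ∑ β ∈ (piAntidiag s m).attach.image Ψ, g β := by
          rw [Finset.sum_image]
          intro a _ b _ hab
          have : (a.1 : ℕ → ℕ) = b.1 := by rw [← hΨ1 a, ← hΨ1 b, hab]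
          exact Subtype.ext this
      _ ≤ ∑' β : S, g β := ENNReal.sum_le_tsum _

end
end MultiIdxAux
theorem multinomial_identity_over_multiindices
    (c : ℕ → ℝ) (hc : ∀ j, 0 ≤ c j) (hsum : Summable c) (m : ℕ) :
    Summable (fun α : {α : ℕ →₀ ℕ // α.sum (fun _ n => n) = m} =>
      (α.1.prod fun _ n => (n.factorial : ℝ))⁻¹ * α.1.prod fun j n => c j ^ n) ∧
    ∑' α : {α : ℕ →₀ ℕ // α.sum (fun _ n => n) = m},
        (α.1.prod fun _ n => (n.factorial : ℝ))⁻¹ * α.1.prod (fun j n => c j ^ n)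
      = (m.factorial : ℝ)⁻¹ * (∑' j : ℕ, c j) ^ m := by
  classical
  set d : ℕ → ℝ≥0 := fun j => (c j).toNNReal with hd
  have hdc : ∀ j, (d j : ℝ) = c j := fun j => Real.coe_toNNReal _ (hc j)
  have hdsum : Summable d := hsum.toNNReal
  set e : ℕ → ℝ≥0∞ := fun j => (d j : ℝ≥0∞) with he
  have hte : ∑' j, e j = ((∑' j, d j : ℝ≥0) : ℝ≥0∞) := (ENNReal.coe_tsum hdsum).symm
  set F : {α : ℕ →₀ ℕ // α.sum (fun _ n => n) = m} → ℝ≥0 := fun α =>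
    (α.1.prod fun _ n => (n.factorial : ℝ≥0))⁻¹ * α.1.prod fun j n => d j ^ n with hF
  have hP0 : ∀ α : {α : ℕ →₀ ℕ // α.sum (fun _ n => n) = m},
      (α.1.prod fun _ n => (n.factorial : ℝ≥0)) ≠ 0 := by
    intro α
    rw [Finsupp.prod]
    refine Finset.prod_ne_zero_iff.2 fun i _ => ?_
    exact_mod_cast (Nat.factorial_pos _).ne'
  have hcoe : ∀ α, (F α : ℝ≥0∞) =
      (α.1.prod fun _ n => (n.factorial : ℝ≥0∞))⁻¹ * α.1.prod fun j n => e j ^ n := by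
    intro α
    rw [hF, ENNReal.coe_mul, ENNReal.coe_inv (hP0 α)]
    simp [Finsupp.prod, he]
  have hmfac0 : ((m.factorial : ℝ≥0∞)) ≠ 0 := by exact_mod_cast (Nat.factorial_pos m).ne'
  have hmfactop : ((m.factorial : ℝ≥0∞)) ≠ ⊤ := ENNReal.natCast_ne_top _
  have hEN : ∑' α : {α : ℕ →₀ ℕ // α.sum (fun _ n => n) = m}, (F α : ℝ≥0∞)
      = (m.factorial : ℝ≥0∞)⁻¹ * (∑' j, e j) ^ m := by
    rw [← MultiIdxAux.key e m, ← ENNReal.tsum_mul_left]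
    refine tsum_congr fun α => ?_
    rw [hcoe α, ← mul_assoc, ← mul_assoc, ENNReal.inv_mul_cancel hmfac0 hmfactop, one_mul]
  have hne : ∑' α : {α : ℕ →₀ ℕ // α.sum (fun _ n => n) = m}, (F α : ℝ≥0∞) ≠ ⊤ := by
    rw [hEN, hte]
    exact ENNReal.mul_ne_top (ENNReal.inv_ne_top.2 hmfac0)
      (ENNReal.pow_ne_top ENNReal.coe_ne_top)
  have hFsum : Summable F := ENNReal.tsum_coe_ne_top_iff_summable.1 hne
  have hfF : (fun α : {α : ℕ →₀ ℕ // α.sum (fun _ n => n) = m} => ((F α : ℝ))) =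
      fun α => (α.1.prod fun _ n => (n.factorial : ℝ))⁻¹ * α.1.prod fun j n => c j ^ n := by
    funext α
    rw [hF]
    push_cast [Finsupp.prod]
    simp [hdc]
  have hcd : ∑' j, c j = ((∑' j, d j : ℝ≥0) : ℝ) := by
    rw [NNReal.coe_tsum]
    exact tsum_congr fun j => (hdc j).symm
  constructor
  · rw [← hfF]
    exact NNReal.summable_coe.2 hFsum
  · rw [← hfF, NNReal.coe_tsum.symm, hcd]
    have := congrArg ENNReal.toReal hEN
    rw [hte] at this
    rw [← ENNReal.coe_tsum hFsum] at this
    simpa [ENNReal.toReal_mul, ENNReal.toReal_inv, ENNReal.toReal_pow] using this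
end
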